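/- Under the hypotheses of the previous statement, if additionally y₁ = R_s^α(q) y₀ + (t^α/Γ(α+1)) b^⊤ (I−qA)^{-1} f(Y), then |y₁ − R_s^α(q) y₀| ≤ (1/Γ(α+1)) ‖(I−qA)^{-1} e‖ · |y₀|, where R_s^α(q) = 1 + (q/Γ(α+1)) b^⊤ (I−qA)^{-1} e. -/

import Mathlib

open scoped NNReal BigOperators

/-- Under the stage-vector bound hypotheses, if
`y₁ = R_s^α(q) y₀ + (t^α/Γ(α+1)) b^⊤ (I-qA)⁻¹ f(Y)`, then
`|y₁ - R_s^α(q) y₀| ≤ (1/Γ(α+1)) ‖(I-qA)⁻¹ e‖ |y₀|`. -/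
theorem update_close_to_stability_function (s : ℕ)
    (A : EuclideanSpace ℂ (Fin s) →L[ℂ] EuclideanSpace ℂ (Fin s))
    (hA : Function.Bijective A)
    (bvec e : EuclideanSpace ℂ (Fin s))
    (lam : ℂ) (hlam : lam ≠ 0) (α : ℝ) (hα : α ∈ Set.Ioo (0:ℝ) 1)
    (L : ℝ≥0) (f : EuclideanSpace ℂ (Fin s) → EuclideanSpace ℂ (Fin s))
    (hf : LipschitzWith L f) (hf0 : f 0 = 0)
    (N : ℝ → (EuclideanSpace ℂ (Fin s) →L[ℂ] EuclideanSpace ℂ (Fin s)))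
    (hN : ∀ t ≥ (0:ℝ),
      N t ∘L (1 - (lam * ((t ^ α : ℝ) : ℂ)) • A) = 1 ∧
      (1 - (lam * ((t ^ α : ℝ) : ℂ)) • A) ∘L N t = 1)
    (hsmall : ∀ t ≥ (0:ℝ), (L : ℝ) * max ‖bvec‖ ‖A‖ * t ^ α * ‖N t‖ < 1 / 2)
    (y₀ : ℂ) (Y : ℝ → EuclideanSpace ℂ (Fin s))
    (hY : ∀ t ≥ (0:ℝ), Y t = y₀ • (N t) e + ((t ^ α : ℝ) : ℂ) • (N t) (A (f (Y t))))
    (R : ℝ → ℂ)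
    (hR : ∀ t, R t = 1 + (lam * ((t ^ α : ℝ) : ℂ)) / ((Real.Gamma (α + 1) : ℝ) : ℂ) *
        ∑ i, bvec i * ((N t) e) i)
    (y₁ : ℝ → ℂ)
    (hy1 : ∀ t ≥ (0:ℝ), y₁ t = R t * y₀ +
        ((t ^ α : ℝ) : ℂ) / ((Real.Gamma (α + 1) : ℝ) : ℂ) *
          ∑ i, bvec i * ((N t) (f (Y t))) i) :
    ∀ t ≥ (0:ℝ), ‖y₁ t - R t * y₀‖ ≤ (1 / Real.Gamma (α + 1)) * ‖(N t) e‖ * ‖y₀‖ := by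
  intro t ht
  have hg : 0 < Real.Gamma (α + 1) := Real.Gamma_pos_of_pos (by linarith [hα.1])
  have hta : (0:ℝ) ≤ t ^ α := Real.rpow_nonneg ht α
  set v := f (Y t) with hv
  have hfv : ‖v‖ ≤ (L : ℝ) * ‖Y t‖ := by
    have := hf.dist_le_mul (Y t) 0
    simpa [hv, hf0, dist_eq_norm] using this
  have hc := hsmall t ht
  have hAm : ‖A‖ ≤ max ‖bvec‖ ‖A‖ := le_max_right _ _
  have hbm : ‖bvec‖ ≤ max ‖bvec‖ ‖A‖ := le_max_left _ _
  have hLnn : (0:ℝ) ≤ L := L.coe_nonneg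
  have hYb : ‖Y t‖ ≤ 2 * ‖(N t) e‖ * ‖y₀‖ := by
    have h1 : ‖Y t‖ ≤ ‖y₀‖ * ‖(N t) e‖ + t ^ α * ‖N t‖ * ‖A‖ * ((L:ℝ) * ‖Y t‖) := by
      conv_lhs => rw [hY t ht]
      refine le_trans (norm_add_le _ _) (add_le_add ?_ ?_)
      · rw [norm_smul]
      · rw [norm_smul]
        simp only [Complex.norm_real, Real.norm_eq_abs, abs_of_nonneg hta]
        calc t ^ α * ‖(N t) (A v)‖ ≤ t ^ α * (‖N t‖ * ‖A v‖) := by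
              gcongr; exact (N t).le_opNorm _
          _ ≤ t ^ α * (‖N t‖ * (‖A‖ * ‖v‖)) := by
              gcongr; exact A.le_opNorm _
          _ ≤ t ^ α * (‖N t‖ * (‖A‖ * ((L:ℝ) * ‖Y t‖))) := by gcongr
          _ = t ^ α * ‖N t‖ * ‖A‖ * ((L:ℝ) * ‖Y t‖) := by ring
    have h2 : (L:ℝ) * ‖A‖ * t ^ α * ‖N t‖ ≤ (L:ℝ) * max ‖bvec‖ ‖A‖ * t ^ α * ‖N t‖ := by
      gcongr
    nlinarith [norm_nonneg (Y t), norm_nonneg ((N t) e), norm_nonneg y₀]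
  have hCS : ∀ w : EuclideanSpace ℂ (Fin s), ‖∑ i, bvec i * w i‖ ≤ ‖bvec‖ * ‖w‖ := by
    intro w
    let bs : EuclideanSpace ℂ (Fin s) := WithLp.toLp 2 (fun i => (starRingEnd ℂ) (bvec i))
    have hbs : ‖bs‖ = ‖bvec‖ := by
      rw [EuclideanSpace.norm_eq, EuclideanSpace.norm_eq]
      simp [bs]
    have h1 : (∑ i, bvec i * w i) = (inner ℂ bs w : ℂ) := by
      rw [PiLp.inner_apply]
      simp [bs, mul_comm]
    rw [h1, ← hbs]
    exact norm_inner_le_norm _ _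
  have key : ‖y₁ t - R t * y₀‖ = t ^ α / Real.Gamma (α + 1) * ‖∑ i, bvec i * ((N t) v) i‖ := by
    rw [hy1 t ht, add_sub_cancel_left, norm_mul, norm_div]
    simp [hv, Complex.norm_real, Real.norm_eq_abs, abs_of_nonneg hta, abs_of_pos hg]
  rw [key]
  have hbound : ‖∑ i, bvec i * ((N t) v) i‖ ≤ ‖bvec‖ * (‖N t‖ * ((L:ℝ) * (2 * ‖(N t) e‖ * ‖y₀‖))) := by
    refine le_trans (hCS _) ?_
    gcongr
    calc ‖(N t) v‖ ≤ ‖N t‖ * ‖v‖ := (N t).le_opNorm _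
      _ ≤ ‖N t‖ * ((L:ℝ) * (2 * ‖(N t) e‖ * ‖y₀‖)) := by
          gcongr
          exact le_trans hfv (by gcongr)
  have hmain : t ^ α * (‖bvec‖ * (‖N t‖ * ((L:ℝ) * (2 * ‖(N t) e‖ * ‖y₀‖)))) ≤
      ‖(N t) e‖ * ‖y₀‖ := by
    have h2 : (L:ℝ) * ‖bvec‖ * t ^ α * ‖N t‖ ≤ (L:ℝ) * max ‖bvec‖ ‖A‖ * t ^ α * ‖N t‖ := by
      gcongr
    nlinarith [mul_nonneg (norm_nonneg ((N t) e)) (norm_nonneg y₀)]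
  calc t ^ α / Real.Gamma (α + 1) * ‖∑ i, bvec i * ((N t) v) i‖
      ≤ t ^ α / Real.Gamma (α + 1) * (‖bvec‖ * (‖N t‖ * ((L:ℝ) * (2 * ‖(N t) e‖ * ‖y₀‖)))) := by
        gcongr
    _ = 1 / Real.Gamma (α + 1) * (t ^ α * (‖bvec‖ * (‖N t‖ * ((L:ℝ) * (2 * ‖(N t) e‖ * ‖y₀‖))))) := by
        ring
    _ ≤ 1 / Real.Gamma (α + 1) * (‖(N t) e‖ * ‖y₀‖) := by
        gcongr
    _ = 1 / Real.Gamma (α + 1) * ‖(N t) e‖ * ‖y₀‖ := by ring
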